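/- Consider a label-setting extension dynamics on a weighted directed graph with vertex set $V$, arc weights $\mathrm{Dist}[i;j] \geq 0$, a time slot assignment $TS : V \to \{1,\ldots,m\}$ with slot start times $\mathrm{StartTime}$ and finish times $\mathrm{FinishTime}$, where extending a state $(len, arr)$ at vertex $i$ along an arc $(i,j)$ produces the state $(len + \mathrm{Dist}[i;j],\, \max(arr + \mathrm{Dist}[i;j],\, \mathrm{StartTime}(TS(j))))$ at $j$, feasible iff the new arrival time is at most $\mathrm{FinishTime}(TS(j))$. If two states $L = (len_L, arr_L)$ and $M = (len_M, arr_M)$ at the same vertex satisfy $len_L \le len_M$ and $arr_L \le arr_M$ (i.e., $L$ dominates $M$), then for every directed path $\pi$ extending from that vertex: the extension of $L$ along $\pi$ has path length at most, and arrival time at each vertex at most, those of the extension of $M$ along $\pi$; in particular, if the extension of $M$ along $\pi$ is feasible at every vertex of $\pi$, then so is the extension of $L$. Consequently, discarding dominated sub-paths does not change the optimal feasible path length from the source to the sink. -/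
import Mathlib


/-- Extension of a label/state `(pathLength, arrivalTime)` at a vertex along a
list of successive vertices: traversing an arc `(i, j)` adds `Dist i j` to the
path length and updates the arrival time to
`max (arr + Dist i j) (startT j)` (waiting for the slot of `j` to open). -/
def extendState {V : Type*} (Dist : V → V → ℝ) (startT : V → ℝ) :
    V → ℝ × ℝ → List V → ℝ × ℝ
  | _, s, [] => s
  | i, s, j :: rest =>
      extendState Dist startT j (s.1 + Dist i j, max (s.2 + Dist i j) (startT j)) rest

/-- Feasibility of the extension of a state with arrival time `arr` at a vertex
along a list of successive vertices: at each newly reached vertex `j` the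
updated arrival time must not exceed `finishT j`. -/
def feasibleAlong {V : Type*} (Dist : V → V → ℝ) (startT finishT : V → ℝ) :
    V → ℝ → List V → Prop
  | _, _, [] => True
  | i, arr, j :: rest =>
      max (arr + Dist i j) (startT j) ≤ finishT j ∧
      feasibleAlong Dist startT finishT j (max (arr + Dist i j) (startT j)) rest

/-- A list of vertices is a walk in the digraph `E` starting from `i` if each
consecutive pair is an arc of `E`. -/
def IsWalkFrom {V : Type*} (E : V → V → Prop) : V → List V → Prop
  | _, [] => True
  | i, j :: rest => E i j ∧ IsWalkFrom E j rest

theorem dominance_aux {V : Type*} (Dist : V → V → ℝ) (startT finishT : V → ℝ)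
    (π : List V) : ∀ (i : V) (lenL arrL lenM arrM : ℝ),
    lenL ≤ lenM → arrL ≤ arrM →
    (extendState Dist startT i (lenL, arrL) π).1 ≤
      (extendState Dist startT i (lenM, arrM) π).1 ∧
    (extendState Dist startT i (lenL, arrL) π).2 ≤
      (extendState Dist startT i (lenM, arrM) π).2 ∧
    (feasibleAlong Dist startT finishT i arrM π →
      feasibleAlong Dist startT finishT i arrL π) := by
  induction π with
  | nil => intro i lenL arrL lenM arrM h1 h2
           exact ⟨h1, h2, fun _ => trivial⟩
  | cons j rest ih =>
      intro i lenL arrL lenM arrM h1 h2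
      have harr' : max (arrL + Dist i j) (startT j) ≤ max (arrM + Dist i j) (startT j) :=
        max_le_max (by linarith) le_rfl
      obtain ⟨a, b, c⟩ := ih j (lenL + Dist i j) (max (arrL + Dist i j) (startT j))
        (lenM + Dist i j) (max (arrM + Dist i j) (startT j)) (by linarith) harr'
      refine ⟨a, b, fun hM => ?_⟩
      exact ⟨le_trans harr' hM.1, c hM.2⟩

/-- Dominance pruning rule of Algorithm 2: if at a common vertex `i` the state
`L = (lenL, arrL)` dominates `M = (lenM, arrM)` (i.e. `lenL ≤ lenM` and
`arrL ≤ arrM`), then along every directed path `π` from `i` the extension of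
`L` has path length and arrival time at most those of the extension of `M`
(`π` ranging over all walks, this holds at every vertex of any extension), and
feasibility of the extension of `M` implies feasibility of the extension of
`L`.  Hence discarding dominated sub-paths preserves the optimal feasible path
length. -/
theorem dominance_pruning (V : Type*) (E : V → V → Prop) (Dist : V → V → ℝ)
    (hDist : ∀ i j, 0 ≤ Dist i j) (m : ℕ) (TS : V → Fin m)
    (StartTime FinishTime : Fin m → ℝ) (i : V) (lenL arrL lenM arrM : ℝ)
    (hlen : lenL ≤ lenM) (harr : arrL ≤ arrM)
    (π : List V) (hπ : IsWalkFrom E i π) :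
    (extendState Dist (fun v => StartTime (TS v)) i (lenL, arrL) π).1 ≤
      (extendState Dist (fun v => StartTime (TS v)) i (lenM, arrM) π).1 ∧
    (extendState Dist (fun v => StartTime (TS v)) i (lenL, arrL) π).2 ≤
      (extendState Dist (fun v => StartTime (TS v)) i (lenM, arrM) π).2 ∧
    (feasibleAlong Dist (fun v => StartTime (TS v)) (fun v => FinishTime (TS v))
        i arrM π →
      feasibleAlong Dist (fun v => StartTime (TS v)) (fun v => FinishTime (TS v))
        i arrL π) := by
  exact dominance_aux Dist _ _ π i lenL arrL lenM arrM hlen harr
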